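/- The symmetry rule is admissible for type casting in the empty context: if ·;· ⊢ A ↪ B : c for some cast c, then there exists a cast c' with ·;· ⊢ B ↪ A : c'. -/
import Mathlib


/-- Types: Int, Top, arrow, de Bruijn type variables, and recursive types μ. -/
inductive Ty : Type
| int : Ty
| top : Ty
| arrow : Ty → Ty → Ty
| var : Nat → Ty
| mu : Ty → Ty
deriving DecidableEq

/-- Shifting of de Bruijn type variables. -/
def tshift (d c : Nat) : Ty → Ty
| .int => .int
| .top => .top
| .arrow A B => .arrow (tshift d c A) (tshift d c B)
| .var n => if n < c then .var n else .var (n + d)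
| .mu A => .mu (tshift d (c+1) A)

/-- Capture-avoiding substitution of type S for variable k. -/
def tsubst (k : Nat) (S : Ty) : Ty → Ty
| .int => .int
| .top => .top
| .arrow A B => .arrow (tsubst k S A) (tsubst k S B)
| .var n => if n = k then S else if k < n then .var (n-1) else .var n
| .mu A => .mu (tsubst (k+1) (tshift 1 0 S) A)

/-- Well-formedness: all free type variables are below n. -/
def Ty.wf : Nat → Ty → Prop
| _, .int => True
| _, .top => True
| n, .arrow A B => A.wf n ∧ B.wf n
| n, .var i => i < n
| n, .mu A => A.wf (n+1)

/-- Brandt–Henglein inductive equi-recursive type equality H ⊢ A ≐ B. -/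
inductive TyEq : List (Ty × Ty) → Ty → Ty → Prop
| assump : (A, B) ∈ H → TyEq H A B
| refl : TyEq H A A
| trans : TyEq H A B → TyEq H B C → TyEq H A C
| symm : TyEq H A B → TyEq H B A
| unfold : TyEq H (.mu A) (tsubst 0 (.mu A) A)
| arrfix : TyEq ((Ty.arrow A1 A2, Ty.arrow B1 B2) :: H) A1 B1 →
           TyEq ((Ty.arrow A1 A2, Ty.arrow B1 B2) :: H) A2 B2 →
           TyEq H (.arrow A1 A2) (.arrow B1 B2)

/-- Cast operators, with de Bruijn cast variables (bound by cfix). -/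
inductive Cast : Type
| cvar : Nat → Cast
| id : Cast
| fold : Ty → Cast
| unfold : Ty → Cast
| arrow : Cast → Cast → Cast
| seq : Cast → Cast → Cast
| cfix : Cast → Cast
deriving DecidableEq

/-- The dual (reverse) cast ¬c. -/
def Cast.dual : Cast → Cast
| .cvar i => .cvar i
| .id => .id
| .fold A => .unfold A
| .unfold A => .fold A
| .arrow c1 c2 => .arrow c1.dual c2.dual
| .seq c1 c2 => .seq c2.dual c1.dual
| .cfix c => .cfix c.dual

/-- Shifting of cast variables. -/
def cshift (d c : Nat) : Cast → Cast
| .cvar n => if n < c then .cvar n else .cvar (n+d)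
| .id => .id
| .fold A => .fold A
| .unfold A => .unfold A
| .arrow c1 c2 => .arrow (cshift d c c1) (cshift d c c2)
| .seq c1 c2 => .seq (cshift d c c1) (cshift d c c2)
| .cfix c1 => .cfix (cshift d (c+1) c1)

/-- Capture-avoiding substitution of a cast for cast variable k. -/
def csubst (k : Nat) (s : Cast) : Cast → Cast
| .cvar n => if n = k then s else if k < n then .cvar (n-1) else .cvar n
| .id => .id
| .fold A => .fold A
| .unfold A => .unfold A
| .arrow c1 c2 => .arrow (csubst k s c1) (csubst k s c2)
| .seq c1 c2 => .seq (csubst k s c1) (csubst k s c2)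
| .cfix c1 => .cfix (csubst (k+1) (cshift 1 0 s) c1)

/-- Type casting judgment 𝔼 ⊢ A ↪ B : c (cast context as de Bruijn list). -/
inductive TypCast : List (Ty × Ty) → Ty → Ty → Cast → Prop
| id : TypCast E A A .id
| arrow : TypCast E A1 B1 c1 → TypCast E A2 B2 c2 →
    TypCast E (.arrow A1 A2) (.arrow B1 B2) (.arrow c1 c2)
| unfold : TypCast E (.mu A) (tsubst 0 (.mu A) A) (.unfold (.mu A))
| fold : TypCast E (tsubst 0 (.mu A) A) (.mu A) (.fold (.mu A))
| seq : TypCast E A B c1 → TypCast E B C c2 → TypCast E A C (.seq c1 c2)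
| var : E[n]? = some (A, B) → TypCast E A B (.cvar n)
| fix : TypCast ((Ty.arrow A1 A2, Ty.arrow B1 B2) :: E)
           (.arrow A1 A2) (.arrow B1 B2) (.arrow c1 c2) →
        TypCast E (.arrow A1 A2) (.arrow B1 B2) (.cfix (.arrow c1 c2))

/-- Terms of λᵘFi (de Bruijn term variables). -/
inductive Tm : Type
| var : Nat → Tm
| lit : Int → Tm
| app : Tm → Tm → Tm
| abs : Ty → Tm → Tm
| cast : Cast → Tm → Tm
deriving DecidableEq

def shiftTm (d c : Nat) : Tm → Tm
| .var n => if n < c then .var n else .var (n+d)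
| .lit n => .lit n
| .app a b => .app (shiftTm d c a) (shiftTm d c b)
| .abs A e => .abs A (shiftTm d (c+1) e)
| .cast cc e => .cast cc (shiftTm d c e)

/-- Capture-avoiding term substitution. -/
def substTm (k : Nat) (s : Tm) : Tm → Tm
| .var n => if n = k then s else if k < n then .var (n-1) else .var n
| .lit n => .lit n
| .app a b => .app (substTm k s a) (substTm k s b)
| .abs A e => .abs A (substTm (k+1) (shiftTm 1 0 s) e)
| .cast cc e => .cast cc (substTm k s e)

/-- Values of λᵘFi. -/
inductive Value : Tm → Prop
| lit : Value (.lit n)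
| abs : Value (.abs A e)
| fold : Value v → Value (.cast (.fold A) v)
| arrow : Value v → Value (.cast (.arrow c1 c2) v)

/-- Call-by-value reduction of λᵘFi, including the cast push rules. -/
inductive Step : Tm → Tm → Prop
| beta : Value v → Step (.app (.abs A e) v) (substTm 0 v e)
| appl : Step e1 e1' → Step (.app e1 e2) (.app e1' e2)
| appr : Value v → Step e2 e2' → Step (.app v e2) (.app v e2')
| cast : Step e e' → Step (.cast c e) (.cast c e')
| castId : Value v → Step (.cast .id v) v
| castArr : Value v1 → Value v2 →
    Step (.app (.cast (.arrow c1 c2) v1) v2)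
         (.cast c2 (.app v1 (.cast c1.dual v2)))
| castSeq : Step (.cast (.seq c1 c2) e) (.cast c2 (.cast c1 e))
| castElim : Value v → Step (.cast (.unfold A) (.cast (.fold B) v)) v
| castFix : Step (.cast (.cfix c) e) (.cast (csubst 0 (.cfix c) c) e)

/-- Equi-recursive (cast-free) call-by-value reduction. -/
inductive EStep : Tm → Tm → Prop
| beta : Value v → EStep (.app (.abs A e) v) (substTm 0 v e)
| appl : EStep e1 e1' → EStep (.app e1 e2) (.app e1' e2)
| appr : Value v → EStep e2 e2' → EStep (.app v e2) (.app v e2')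

/-- Erasure of casts. -/
def erase : Tm → Tm
| .var n => .var n
| .lit n => .lit n
| .app a b => .app (erase a) (erase b)
| .abs A e => .abs A (erase e)
| .cast _ e => erase e

/-- Typing of λᵘFi. -/
inductive Typing : List Ty → Tm → Ty → Prop
| var : G[n]? = some A → Typing G (.var n) A
| lit : Typing G (.lit n) .int
| abs : Typing (A :: G) e B → Typing G (.abs A e) (.arrow A B)
| app : Typing G e1 (.arrow A B) → Typing G e2 A → Typing G (.app e1 e2) B
| cast : Typing G e A → TypCast [] A B c → Typing G (.cast c e) B

/-- Equi-recursive typing with elaboration Γ ⊢ₑ e : A ▷ e'. -/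
inductive ETyping : List Ty → Tm → Ty → Tm → Prop
| var : G[n]? = some A → ETyping G (.var n) A (.var n)
| lit : ETyping G (.lit n) .int (.lit n)
| abs : ETyping (A :: G) e B e' → ETyping G (.abs A e) (.arrow A B) (.abs A e')
| app : ETyping G e1 (.arrow A B) e1' → ETyping G e2 A e2' →
        ETyping G (.app e1 e2) B (.app e1' e2')
| eq : ETyping G e A e' → TypCast [] A B c → ETyping G e B (.cast c e')

/-- Iso-recursive Amber subtyping (de Bruijn presentation), n counts bound variable pairs. -/
inductive AmberSub : Nat → Ty → Ty → Prop
| top : Ty.wf n A → AmberSub n A .top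
| int : AmberSub n .int .int
| var : i < n → AmberSub n (.var i) (.var i)
| self : Ty.wf n (.mu A) → AmberSub n (.mu A) (.mu A)
| arrow : AmberSub n B1 A1 → AmberSub n A2 B2 → AmberSub n (.arrow A1 A2) (.arrow B1 B2)
| murec : AmberSub (n+1) A B → AmberSub n (.mu A) (.mu B)

/-- Typing of λᵘ<:Fi: λᵘFi typing plus subsumption. -/
inductive STyping : List Ty → Tm → Ty → Prop
| var : G[n]? = some A → STyping G (.var n) A
| lit : STyping G (.lit n) .int
| abs : STyping (A :: G) e B → STyping G (.abs A e) (.arrow A B)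
| app : STyping G e1 (.arrow A B) → STyping G e2 A → STyping G (.app e1 e2) B
| cast : STyping G e A → TypCast [] A B c → STyping G (.cast c e) B
| sub : STyping G e A → AmberSub 0 A B → STyping G e B

/-- Divergence under a reduction relation. -/
def Diverges (R : Tm → Tm → Prop) (e : Tm) : Prop :=
  ∀ e', Relation.ReflTransGen R e e' → ∃ e'', R e' e''

theorem cast_dual (E : List (Ty × Ty)) (A B : Ty) (c : Cast)
    (h : TypCast E A B c) :
    TypCast (E.map (fun p => (p.2, p.1))) B A c.dual := by
  induction h with
  | id => exact .id
  | arrow _ _ ih1 ih2 => exact .arrow ih1 ih2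
  | unfold => exact .fold
  | fold => exact .unfold
  | seq _ _ ih1 ih2 => exact .seq ih2 ih1
  | var h => exact .var (by simp [h])
  | fix _ ih => exact .fix ih

/-- Symmetry is admissible for type casting in the empty context. -/
theorem cast_symm_admissible (A B : Ty) (c : Cast)
    (h : TypCast [] A B c) : ∃ c', TypCast [] B A c' :=
  ⟨c.dual, cast_dual [] A B c h⟩
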